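/- Let C be a category with coproducts indexed by A*, let A be an alphabet and L : O_A → C a C-language. Define the C-automaton 𝒜_init by: 𝒜_init(center) = the coproduct of copies of L(left) indexed by words u ∈ A*; 𝒜_init(▷) : L(left) → 𝒜_init(center) is the coprojection at the empty word ε; 𝒜_init(a) : 𝒜_init(center) → 𝒜_init(center) is the morphism whose u-indexed component is the coprojection at ua; and 𝒜_init(◁) : 𝒜_init(center) → L(right) is the morphism whose u-indexed component is L(▷u◁). Then 𝒜_init accepts L and is an initial object of Auto(L). -/

import Mathlib

open CategoryTheory CategoryTheory.Limits

universe v u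

/-! ### The input category `I_A` of word automata -/

inductive WObj (A : Type) : Type where
  | left | center | right

inductive WEdge {A : Type} : WObj A → WObj A → Type where
  | tri : WEdge WObj.left WObj.center
  | letter (a : A) : WEdge WObj.center WObj.center
  | tril : WEdge WObj.center WObj.right

instance (A : Type) : Quiver (WObj A) := ⟨WEdge⟩

/-- `I_A`: the free category on the graph `left -▷→ center -a→ center -◁→ right`. -/
def IA (A : Type) : Type := Paths (WObj A)

instance (A : Type) : Category (IA A) :=
  inferInstanceAs (Category (Paths (WObj A)))

def IA.l (A : Type) : IA A := WObj.left
def IA.c (A : Type) : IA A := WObj.center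
def IA.r (A : Type) : IA A := WObj.right

/-- The generating morphism `▷ : left ⟶ center`. -/
def IA.tri (A : Type) : IA.l A ⟶ IA.c A := Quiver.Hom.toPath WEdge.tri
/-- The generating morphism `a : center ⟶ center` for a letter `a`. -/
def IA.letter {A : Type} (a : A) : IA.c A ⟶ IA.c A := Quiver.Hom.toPath (WEdge.letter a)
/-- The generating morphism `◁ : center ⟶ right`. -/
def IA.tril (A : Type) : IA.c A ⟶ IA.r A := Quiver.Hom.toPath WEdge.tril

/-- The word spelled by a path in the graph (the sequence of `letter` edges used). -/
def toWord {A : Type} : ∀ {X Y : WObj A}, Quiver.Path X Y → List A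
  | _, _, Quiver.Path.nil => []
  | _, _, Quiver.Path.cons p e =>
      toWord p ++ (match e with
        | WEdge.letter a => [a]
        | _ => [])

/-- The path `center → center` spelling a word `w`. -/
def pathCC {A : Type} : List A → ((IA.c A) ⟶ (IA.c A))
  | [] => Quiver.Path.nil
  | a :: w => (Quiver.Hom.toPath (WEdge.letter a)).comp (pathCC w)

/-- The path `▷ w ◁ : left ⟶ right` spelling a word `w`. -/
def pathLR {A : Type} (w : List A) : (IA.l A) ⟶ (IA.r A) :=
  IA.tri A ≫ pathCC w ≫ IA.tril A

theorem path_from_right {A : Type} : ∀ {Z : WObj A},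
    Quiver.Path (WObj.right : WObj A) Z → Z = WObj.right
  | _, Quiver.Path.nil => rfl
  | _, Quiver.Path.cons p e => by
      have h := path_from_right p
      subst h
      exact nomatch e

theorem path_ll_nil {A : Type} (p : Quiver.Path (WObj.left : WObj A) WObj.left) :
    p = Quiver.Path.nil := by
  cases p with
  | nil => rfl
  | cons q e => exact nomatch e

theorem path_rr_nil {A : Type} (p : Quiver.Path (WObj.right : WObj A) WObj.right) :
    p = Quiver.Path.nil := by
  cases p with
  | nil => rfl
  | cons q e =>
      have h := path_from_right q
      subst h
      exact nomatch e

theorem path_rl_false {A : Type} (p : Quiver.Path (WObj.right : WObj A) WObj.left) :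
    False := by
  have := path_from_right p
  exact nomatch this

/-- `O_A`: the full subcategory of `I_A` on the objects `left` and `right`. -/
def OA (A : Type) : Type := ObjectProperty.FullSubcategory (fun X : IA A => X ≠ IA.c A)

instance (A : Type) : Category (OA A) :=
  inferInstanceAs (Category (ObjectProperty.FullSubcategory (fun X : IA A => X ≠ IA.c A)))

/-- The inclusion functor `ι : O_A ⥤ I_A`. -/
def OA.inc (A : Type) : OA A ⥤ IA A := ObjectProperty.ι _

def OA.l (A : Type) : OA A := ⟨IA.l A, fun h => by cases h⟩
def OA.r (A : Type) : OA A := ⟨IA.r A, fun h => by cases h⟩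

/-- The morphism `▷ w ◁ : left ⟶ right` of `O_A`. -/
def OA.word {A : Type} (w : List A) : OA.l A ⟶ OA.r A := InducedCategory.homMk (pathLR w)

/-- The language `O_A ⥤ C` determined by two objects `LI`, `LO` of `C` and a function
assigning to every word `w ∈ A*` a morphism `LI ⟶ LO` (the value at `▷w◁`). -/
def mkLang {A : Type} {C : Type u} [Category.{v} C] (LI LO : C)
    (f : List A → (LI ⟶ LO)) : OA A ⥤ C where
  obj X :=
    match X with
    | ⟨WObj.left, _⟩ => LI
    | ⟨WObj.right, _⟩ => LO
    | ⟨WObj.center, h⟩ => absurd rfl h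
  map {X Y} p :=
    match X, Y, p with
    | ⟨WObj.left, _⟩, ⟨WObj.left, _⟩, _ => 𝟙 LI
    | ⟨WObj.left, _⟩, ⟨WObj.right, _⟩, p => f (toWord p.hom)
    | ⟨WObj.right, _⟩, ⟨WObj.right, _⟩, _ => 𝟙 LO
    | ⟨WObj.right, _⟩, ⟨WObj.left, _⟩, p => (path_rl_false p.hom).elim
    | ⟨WObj.center, h⟩, _, _ => absurd rfl h
    | _, ⟨WObj.center, h⟩, _ => absurd rfl h
  map_id X := by
    rcases X with ⟨(_|_|_), hX⟩
    · rfl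
    · exact absurd rfl hX
    · rfl
  map_comp {X Y Z} p q := by
    rcases X with ⟨(_|_|_), hX⟩ <;> rcases Y with ⟨(_|_|_), hY⟩ <;>
      rcases Z with ⟨(_|_|_), hZ⟩ <;>
      first
        | exact absurd rfl hX
        | exact absurd rfl hY
        | exact absurd rfl hZ
        | exact (path_rl_false p.hom).elim
        | exact (path_rl_false q.hom).elim
        | exact (Category.id_comp _).symm
        | (have hp := path_ll_nil p.hom
           show f (toWord (Quiver.Path.comp p.hom q.hom)) = 𝟙 LI ≫ f (toWord q.hom)
           rw [hp, Category.id_comp]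
           exact congrArg (fun x => f (toWord x)) (Quiver.Path.nil_comp _))
        | (have hq := path_rr_nil q.hom
           show f (toWord (Quiver.Path.comp p.hom q.hom)) = f (toWord p.hom) ≫ 𝟙 LO
           rw [hq, Category.comp_id]
           exact congrArg (fun x => f (toWord x)) (Quiver.Path.comp_nil _))

/-- A `C`-automaton `M` accepts the `C`-language `L` when `ι ⋙ M = L`. -/
def Accepts {A : Type} {C : Type u} [Category.{v} C] (M : IA A ⥤ C) (L : OA A ⥤ C) : Prop :=
  OA.inc A ⋙ M = L

/-- The category `Auto(L)` of `C`-automata accepting the language `L`; morphisms are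
natural transformations whose whiskering along `ι` is the identity of `L`. -/
def Auto (A : Type) {C : Type u} [Category.{v} C] (L : OA A ⥤ C) : Type _ :=
  { M : IA A ⥤ C // Accepts M L }

instance (A : Type) {C : Type u} [Category.{v} C] (L : OA A ⥤ C) :
    Category (Auto A L) where
  Hom M N := { α : M.1 ⟶ N.1 //
    CategoryTheory.Functor.whiskerLeft (OA.inc A) α = eqToHom (M.2.trans N.2.symm) }
  id M := ⟨𝟙 M.1, by simp⟩
  comp {M N P} f g := ⟨f.1 ≫ g.1, by
    rw [CategoryTheory.Functor.whiskerLeft_comp, f.2, g.2, eqToHom_trans]⟩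
  id_comp f := Subtype.ext (Category.id_comp _)
  comp_id f := Subtype.ext (Category.comp_id _)
  assoc f g h := Subtype.ext (Category.assoc _ _ _)

/-- The functor `St : Auto(L) ⥤ C` evaluating an automaton at the object `center`. -/
def St (A : Type) {C : Type u} [Category.{v} C] (L : OA A ⥤ C) : Auto A L ⥤ C where
  obj M := M.1.obj (IA.c A)
  map f := f.1.app (IA.c A)
  map_id _ := rfl
  map_comp _ _ := rfl

/-- Constructor for objects of `Auto(L)`. -/
def Auto.mk {A : Type} {C : Type u} [Category.{v} C] {L : OA A ⥤ C}
    (M : IA A ⥤ C) (h : Accepts M L) : Auto A L := ⟨M, h⟩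

/-- The underlying natural transformation of a morphism in `Auto(L)`. -/
def Auto.nat {A : Type} {C : Type u} [Category.{v} C] {L : OA A ⥤ C} {M N : Auto A L}
    (α : M ⟶ N) : M.1 ⟶ N.1 :=
  (show { β : M.1 ⟶ N.1 //
      CategoryTheory.Functor.whiskerLeft (OA.inc A) β = eqToHom (M.2.trans N.2.symm) } from α).1

variable {A : Type} {C : Type u} [Category.{v} C]

/-- The initial automaton for a language `L : O_A ⥤ C`, defined on the generating graph:
its state object is the `A*`-indexed copower of `L(left)`, `▷` is the coprojection at the
empty word, a letter `a` acts by sending the `u`-component to the coprojection at `u·a`,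
and `◁` has `u`-component `L(▷u◁)`. -/
noncomputable def AinitPre [HasColimitsOfShape (Discrete (List A)) C] (L : OA A ⥤ C) :
    WObj A ⥤q C where
  obj X :=
    match X with
    | WObj.left => L.obj (OA.l A)
    | WObj.center => ∐ (fun _ : List A => L.obj (OA.l A))
    | WObj.right => L.obj (OA.r A)
  map e :=
    match e with
    | WEdge.tri => Sigma.ι (fun _ : List A => L.obj (OA.l A)) ([] : List A)
    | WEdge.letter a =>
        Sigma.desc (fun u : List A => Sigma.ι (fun _ : List A => L.obj (OA.l A)) (u ++ [a]))
    | WEdge.tril => Sigma.desc (fun u : List A => L.map (OA.word u))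

/-- The automaton `𝒜_init`, i.e. the above data regarded as a functor `I_A ⥤ C`. -/
noncomputable def Ainit [HasColimitsOfShape (Discrete (List A)) C] (L : OA A ⥤ C) :
    IA A ⥤ C :=
  Paths.lift (AinitPre L)

/-! Every morphism `left ⟶ right` of `I_A` is `▷w◁` for the word `w` it spells, and in `𝒜_init`
the composite `▷ ≫ w` is the coprojection at `w`; hence `𝒜_init(▷w◁) = L(▷w◁)`. A morphism
`𝒜_init ⟶ M` of `Auto(L)` is the identity at `left` and `right`, and naturality along `▷u` forces
its `center` component on the `u`-th summand to be `M(▷u)`. This gives uniqueness; conversely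
these components are natural on each generating edge, which gives existence. -/

theorem pathCC_append (u v : List A) : pathCC (u ++ v) = pathCC u ≫ pathCC v := by
  induction u with
  | nil => exact (Quiver.Path.nil_comp _).symm
  | cons a u ih =>
    rw [List.cons_append, pathCC, ih]
    exact (Quiver.Path.comp_assoc _ _ _).symm

theorem pathCC_cons (a : A) (w : List A) : pathCC (a :: w) = IA.letter a ≫ pathCC w := rfl

theorem pathCC_concat (u : List A) (a : A) : pathCC (u ++ [a]) = pathCC u ≫ IA.letter a := by
  rw [pathCC_append]
  rfl

theorem path_left_center_eq :
    ∀ p : Quiver.Path (WObj.left : WObj A) WObj.center, p = IA.tri A ≫ pathCC (toWord p)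
  | Quiver.Path.cons q WEdge.tri => by
    rw [path_ll_nil q]
    simp only [toWord, List.append_nil]
    rfl
  | Quiver.Path.cons q (WEdge.letter a) => by
    simp only [toWord]
    rw [pathCC_concat, ← Category.assoc, ← path_left_center_eq q]
    rfl

theorem path_left_right_eq :
    ∀ p : Quiver.Path (WObj.left : WObj A) WObj.right, p = pathLR (toWord p)
  | Quiver.Path.cons q WEdge.tril => by
    simp only [toWord, List.append_nil]
    rw [pathLR, ← Category.assoc, ← path_left_center_eq q]
    rfl

theorem OA.hom_eq_word {hl : (WObj.left : IA A) ≠ IA.c A} {hr : (WObj.right : IA A) ≠ IA.c A}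
    (f : (⟨WObj.left, hl⟩ : OA A) ⟶ ⟨WObj.right, hr⟩) : f = OA.word (toWord f.hom) :=
  InducedCategory.hom_ext (path_left_right_eq f.hom)

theorem OA.functor_ext {F G : OA A ⥤ C} (hl : F.obj (OA.l A) = G.obj (OA.l A))
    (hr : F.obj (OA.r A) = G.obj (OA.r A))
    (hw : ∀ w, F.map (OA.word w) = eqToHom hl ≫ G.map (OA.word w) ≫ eqToHom hr.symm) :
    F = G := by
  refine CategoryTheory.Functor.ext (fun X => ?_) (fun X Y f => ?_)
  · obtain ⟨(_ | _ | _), hX⟩ := X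
    exacts [hl, absurd rfl hX, hr]
  · obtain ⟨(_ | _ | _), hX⟩ := X <;> obtain ⟨(_ | _ | _), hY⟩ := Y <;>
      first | exact absurd rfl hX | exact absurd rfl hY | skip
    · rw [(InducedCategory.hom_ext (path_ll_nil f.hom) : f = 𝟙 _)]
      erw [F.map_id, G.map_id]
      simp
    · rw [OA.hom_eq_word f]
      exact hw _
    · exact (path_rl_false f.hom).elim
    · rw [(InducedCategory.hom_ext (path_rr_nil f.hom) : f = 𝟙 _)]
      erw [F.map_id, G.map_id]
      simp

namespace Ainit

variable [HasColimitsOfShape (Discrete (List A)) C] (L : OA A ⥤ C)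

theorem map_tri : (Ainit L).map (IA.tri A) = Sigma.ι (fun _ : List A => L.obj (OA.l A)) [] :=
  Paths.lift_toPath _ _

theorem map_letter (a : A) :
    (Ainit L).map (IA.letter a) =
      Sigma.desc (fun u : List A => Sigma.ι (fun _ : List A => L.obj (OA.l A)) (u ++ [a])) :=
  Paths.lift_toPath _ _

theorem map_tril :
    (Ainit L).map (IA.tril A) = Sigma.desc (fun u : List A => L.map (OA.word u)) :=
  Paths.lift_toPath _ _

theorem ι_comp_map_pathCC (u w : List A) :
    Sigma.ι (fun _ : List A => L.obj (OA.l A)) u ≫ (Ainit L).map (pathCC w) =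
      Sigma.ι (fun _ : List A => L.obj (OA.l A)) (u ++ w) := by
  induction w generalizing u with
  | nil =>
    rw [List.append_nil]
    exact Category.comp_id _
  | cons a w ih =>
    rw [pathCC_cons, Functor.map_comp, map_letter]
    erw [Sigma.ι_desc_assoc]
    exact (ih (u ++ [a])).trans (by rw [List.append_assoc, List.singleton_append])

theorem map_tri_pathCC (w : List A) :
    (Ainit L).map (IA.tri A ≫ pathCC w) = Sigma.ι (fun _ : List A => L.obj (OA.l A)) w := by
  rw [Functor.map_comp, map_tri]
  exact ι_comp_map_pathCC L [] w

theorem map_pathLR (w : List A) : (Ainit L).map (pathLR w) = L.map (OA.word w) := by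
  rw [pathLR, ← Category.assoc, Functor.map_comp, map_tri_pathCC, map_tril]
  exact Sigma.ι_desc _ _

theorem accepts : Accepts (Ainit L) L :=
  OA.functor_ext rfl rfl fun w => by
    erw [eqToHom_refl, eqToHom_refl, Category.id_comp, Category.comp_id]
    exact map_pathLR L w

theorem ι_comp_app {M : IA A ⥤ C} (α : Ainit L ⟶ M) (u : List A) :
    Sigma.ι (fun _ : List A => L.obj (OA.l A)) u ≫ α.app (IA.c A) =
      α.app (IA.l A) ≫ M.map (IA.tri A ≫ pathCC u) := by
  rw [← map_tri_pathCC]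
  exact α.naturality _

theorem hom_ext {M : IA A ⥤ C} {α β : Ainit L ⟶ M} (hl : α.app (IA.l A) = β.app (IA.l A))
    (hr : α.app (IA.r A) = β.app (IA.r A)) : α = β := by
  ext X
  obtain _ | _ | _ := X
  · exact hl
  · refine Sigma.hom_ext _ _ fun u => ?_
    erw [ι_comp_app, ι_comp_app, hl]
  · exact hr

/-- Stated for `L = ι ⋙ M`, so that the components at `left` and `right` are identities rather
than `eqToHom`s. -/
noncomputable def desc (M : IA A ⥤ C) : Ainit (OA.inc A ⋙ M) ⟶ M :=
  Paths.liftNatTrans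
    (fun
      | WObj.left => 𝟙 (M.obj (IA.l A))
      | WObj.center => Sigma.desc fun u => M.map (IA.tri A ≫ pathCC u)
      | WObj.right => 𝟙 (M.obj (IA.r A)))
    (by
      rintro _ _ (_ | a | _)
      · erw [map_tri, Sigma.ι_desc]
        exact (Category.id_comp _).symm
      · erw [map_letter]
        refine Sigma.hom_ext _ _ fun u => ?_
        erw [Sigma.ι_desc_assoc, Sigma.ι_desc, Sigma.ι_desc_assoc]
        rw [pathCC_concat]
        exact (congrArg M.map (Category.assoc _ _ _).symm).trans (M.map_comp _ _)
      · erw [map_tril]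
        refine Sigma.hom_ext _ _ fun u => ?_
        erw [Sigma.ι_desc_assoc, Sigma.ι_desc_assoc]
        exact (Category.comp_id _).trans
          ((congrArg M.map (Category.assoc _ _ _).symm).trans (M.map_comp _ _)))

theorem whiskerLeft_desc (M : IA A ⥤ C) (h : Accepts (Ainit (OA.inc A ⋙ M)) (OA.inc A ⋙ M)) :
    Functor.whiskerLeft (OA.inc A) (desc M) = eqToHom h := by
  ext ⟨(_ | _ | _), hX⟩
  · erw [eqToHom_app]
    rfl
  · exact absurd rfl hX
  · erw [eqToHom_app]
    rfl

theorem nonempty_autoHom (N : Auto A L) :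
    Nonempty (Auto.mk (Ainit L) (accepts L) ⟶ N) := by
  obtain ⟨M, rfl⟩ := N
  exact ⟨⟨desc M, whiskerLeft_desc M _⟩⟩

theorem autoHom_ext {h : Accepts (Ainit L) L} {N : Auto A L} (f g : Auto.mk (Ainit L) h ⟶ N) :
    f = g := by
  have hfg := f.2.trans g.2.symm
  exact Subtype.ext (hom_ext L (congrArg (·.app (OA.l A)) hfg) (congrArg (·.app (OA.r A)) hfg))

end Ainit

/-- `𝒜_init` accepts `L` and is an initial object of `Auto(L)`. -/
theorem Ainit_accepts_and_initial [HasColimitsOfShape (Discrete (List A)) C]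
    (L : OA A ⥤ C) :
    ∃ h : Accepts (Ainit L) L, Nonempty (IsInitial (Auto.mk (Ainit L) h)) :=
  ⟨Ainit.accepts L, ⟨IsInitial.ofUniqueHom (fun N => (Ainit.nonempty_autoHom L N).some)
    fun _ _ => Ainit.autoHom_ext L _ _⟩⟩
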